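/- arXiv:2509.13745 — 4 statements merged into one kernel-verified Lean document; each statement's English description precedes it below -/
import Mathlib

section
/- With α = 0, the LOP-ℓ2/ℓ1 penalty satisfies ψ₀(x) = √N · ‖x‖₂ for every x ∈ ℝ^N. -/
open scoped ENNReal

noncomputable def phi (x σ : ℝ) : ℝ≥0∞ :=
  if 0 < σ then ENNReal.ofReal (x ^ 2 / (2 * σ) + σ / 2)
  else if x = 0 ∧ σ = 0 then 0 else ⊤

/-- ℓ1 norm of the first-order difference Dσ. -/
noncomputable def tv {N : ℕ} (σ : Fin N → ℝ) : ℝ :=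
  ∑ i : Fin (N - 1),
    |σ ⟨i.val + 1, by have := i.isLt; omega⟩ - σ ⟨i.val, by have := i.isLt; omega⟩|

/-- The LOP-ℓ2/ℓ1 penalty. -/
noncomputable def psi {N : ℕ} (α : ℝ) (x : Fin N → ℝ) : ℝ≥0∞ :=
  ⨅ (σ : Fin N → ℝ) (_ : tv σ ≤ α), ∑ n : Fin N, phi (x n) (σ n)

/-!
With `α = 0` the constraint `‖Dσ‖₁ ≤ 0` forces `σ` to be constant, so `ψ₀(x)` is the infimum
over `c` of `∑ φ(xₙ, c)`. For `c ≤ 0` this is `⊤` unless `x = 0`, and for `c > 0` it equals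
`‖x‖²/(2c) + Nc/2 ≥ √N ‖x‖₂` by AM-GM, with equality at `c = ‖x‖₂/√N`.
-/

lemma tv_const {N : ℕ} (c : ℝ) : tv (fun _ : Fin N => c) = 0 := by
  simp [tv]

lemma tv_le_zero_iff {N : ℕ} (σ : Fin N → ℝ) : tv σ ≤ 0 ↔ ∃ c, σ = fun _ => c := by
  refine ⟨fun h => ?_, fun ⟨c, hc⟩ => hc ▸ (tv_const c).le⟩
  rcases Nat.eq_zero_or_pos N with rfl | hN
  · exact ⟨0, funext fun i => i.elim0⟩
  have hstep : ∀ i : Fin (N - 1),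
      σ ⟨i.val + 1, by have := i.isLt; omega⟩ = σ ⟨i.val, by have := i.isLt; omega⟩ := by
    intro i
    have hzero := (Finset.sum_eq_zero_iff_of_nonneg fun i _ => abs_nonneg _).mp
      (le_antisymm h (Finset.sum_nonneg fun i _ => abs_nonneg _)) i (Finset.mem_univ i)
    exact sub_eq_zero.mp (abs_eq_zero.mp hzero)
  have hfirst : ∀ m (hm : m < N), σ ⟨m, hm⟩ = σ ⟨0, hN⟩ := by
    intro m
    induction m with
    | zero => intro; rfl
    | succ m ih => intro hm; exact (hstep ⟨m, by omega⟩).trans (ih (by omega))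
  exact ⟨σ ⟨0, hN⟩, funext fun n => hfirst n.val n.isLt⟩

lemma psi_zero_eq_iInf_const {N : ℕ} (x : Fin N → ℝ) :
    psi 0 x = ⨅ c : ℝ, ∑ n, phi (x n) c := by
  refine le_antisymm (le_iInf fun c => ?_) (le_iInf₂ fun σ hσ => ?_)
  · exact iInf₂_le (fun _ => c) (tv_const c).le
  · obtain ⟨c, rfl⟩ := (tv_le_zero_iff σ).mp hσ
    exact iInf_le _ c

lemma phi_of_nonpos {x σ : ℝ} (hσ : σ ≤ 0) (hx : x ≠ 0) : phi x σ = ⊤ := by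
  simp [phi, not_lt.mpr hσ, hx]

lemma sum_phi_const_of_pos {N : ℕ} (x : Fin N → ℝ) {c : ℝ} (hc : 0 < c) :
    ∑ n, phi (x n) c = ENNReal.ofReal ((∑ n, x n ^ 2) / (2 * c) + N * c / 2) := by
  have hsum : (∑ n, x n ^ 2) / (2 * c) + N * c / 2 = ∑ n, (x n ^ 2 / (2 * c) + c / 2) := by
    simp only [Finset.sum_add_distrib, Finset.sum_div, Finset.sum_const, Finset.card_univ,
      Fintype.card_fin, nsmul_eq_mul]
    ring
  rw [hsum, ENNReal.ofReal_sum_of_nonneg fun n _ => by positivity]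
  simp [phi, hc]

lemma sqrt_mul_sqrt_le_div_add {a b c : ℝ} (ha : 0 ≤ a) (hb : 0 ≤ b) (hc : 0 < c) :
    √b * √a ≤ a / (2 * c) + b * c / 2 := by
  -- `a/(2c) + bc/2 - √a√b = (√a - √b c)² / (2c)`
  have hsq : 0 ≤ (√a - √b * c) ^ 2 := sq_nonneg _
  rw [div_add_div _ _ (by positivity) two_ne_zero, le_div_iff₀ (by positivity)]
  have hb' : √b ^ 2 * c ^ 2 = b * c ^ 2 := by rw [Real.sq_sqrt hb]
  nlinarith [Real.sq_sqrt ha]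

lemma div_add_eq_sqrt_mul_sqrt {a b : ℝ} (ha : 0 < a) (hb : 0 < b) :
    a / (2 * √(a / b)) + b * √(a / b) / 2 = √b * √a := by
  have hsa := Real.sq_sqrt ha.le
  have hsb := Real.sq_sqrt hb.le
  have : 0 < √a := Real.sqrt_pos.mpr ha
  have : 0 < √b := Real.sqrt_pos.mpr hb
  rw [Real.sqrt_div ha.le]
  field_simp
  nlinarith

lemma ofReal_sqrt_mul_sqrt_le_sum_phi_const {N : ℕ} (x : Fin N → ℝ) (c : ℝ) :
    ENNReal.ofReal (√N * √(∑ n, x n ^ 2)) ≤ ∑ n, phi (x n) c := by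
  rcases le_or_gt c 0 with hc | hc
  · by_cases hx : ∀ n, x n = 0
    · simp [hx]
    · obtain ⟨n, hn⟩ := not_forall.mp hx
      calc _ ≤ ⊤ := le_top
        _ = phi (x n) c := (phi_of_nonpos hc hn).symm
        _ ≤ ∑ n, phi (x n) c :=
          Finset.single_le_sum (f := fun n => phi (x n) c) (fun _ _ => zero_le) (Finset.mem_univ n)
  · rw [sum_phi_const_of_pos x hc]
    exact ENNReal.ofReal_le_ofReal (sqrt_mul_sqrt_le_div_add (by positivity) N.cast_nonneg hc)

/-- ψ₀(x) = √N · ‖x‖₂ for every x ∈ ℝ^N. -/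
theorem psi_zero_eq (N : ℕ) (x : Fin N → ℝ) :
    psi 0 x = ENNReal.ofReal (Real.sqrt N * Real.sqrt (∑ n : Fin N, x n ^ 2)) := by
  rw [psi_zero_eq_iInf_const]
  refine le_antisymm ?_ (le_iInf (ofReal_sqrt_mul_sqrt_le_sum_phi_const x))
  set S := ∑ n : Fin N, x n ^ 2
  rcases (show 0 ≤ S by positivity).eq_or_lt with hS0 | hSpos
  · have hx : ∀ n, x n = 0 := fun n => pow_eq_zero_iff two_ne_zero |>.mp
      ((Finset.sum_eq_zero_iff_of_nonneg fun _ _ => sq_nonneg _).mp hS0.symm n (Finset.mem_univ n))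
    refine (iInf_le _ 0).trans (le_of_eq ?_)
    simp [phi, hx, ← hS0]
  · have hN : (0 : ℝ) < N := by
      rcases N.eq_zero_or_pos with rfl | hN
      · simp [S] at hSpos
      · exact_mod_cast hN
    refine (iInf_le _ √(S / N)).trans (le_of_eq ?_)
    rw [sum_phi_const_of_pos x (Real.sqrt_pos.mpr (div_pos hSpos hN)),
      div_add_eq_sqrt_mul_sqrt hSpos hN]
end

section
/- For every α ≥ 0, the LOP-ℓ2/ℓ1 penalty ψ_α is a convex function on ℝ^N. -/
/-!
On the set where it is finite, `φ(x, σ) = x²/(2σ) + σ/2` is positively homogeneous of degree one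
and subadditive (Sedrakyan's inequality `(a + b)²/(s + u) ≤ a²/s + b²/u`), hence jointly convex;
the constraint set `{σ | ‖Dσ‖₁ ≤ α}` is convex. So if `σ` and `τ` are feasible for `x` and `y`,
then `tσ + (1 - t)τ` is feasible for `tx + (1 - t)y`, with objective value at most
`t ∑ φ(xₙ, σₙ) + (1 - t) ∑ φ(yₙ, τₙ)`; taking infima over `σ` and `τ` gives the claim.
-/

open scoped ENNReal

lemma add_sq_div_add_le {a b s u : ℝ} (hs : 0 ≤ s) (hu : 0 ≤ u) (ha : s = 0 → a = 0)
    (hb : u = 0 → b = 0) : (a + b) ^ 2 / (s + u) ≤ a ^ 2 / s + b ^ 2 / u := by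
  obtain rfl | hs := hs.eq_or_lt
  · simp [ha rfl]
  obtain rfl | hu := hu.eq_or_lt
  · simp [hb rfl]
  simpa [Fin.sum_univ_two] using
    Finset.sq_sum_div_le_sum_sq_div Finset.univ ![a, b] (g := ![s, u])
      (by simp [Fin.forall_fin_two, hs, hu])

section phi

variable {a b s u : ℝ}

-- At `s = 0, a = 0` the formula evaluates to `0 / 0 + 0 = 0`, which is the right value.
lemma phi_eq_ofReal (hs : 0 ≤ s) (ha : s = 0 → a = 0) :
    phi a s = ENNReal.ofReal (a ^ 2 / (2 * s) + s / 2) := by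
  obtain rfl | hs := hs.eq_or_lt
  · simp [phi, ha rfl]
  simp [phi, hs]

lemma phi_eq_top (h : ¬(0 ≤ s ∧ (s = 0 → a = 0))) : phi a s = ⊤ := by
  unfold phi
  split_ifs with hs h₀
  · exact absurd ⟨hs.le, fun h => absurd h hs.ne'⟩ h
  · exact absurd ⟨h₀.2.ge, fun _ => h₀.1⟩ h
  · rfl

lemma phi_add_le (a b s u : ℝ) : phi (a + b) (s + u) ≤ phi a s + phi b u := by
  by_cases h₁ : 0 ≤ s ∧ (s = 0 → a = 0)
  swap
  · simp [phi_eq_top h₁]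
  by_cases h₂ : 0 ≤ u ∧ (u = 0 → b = 0)
  swap
  · simp [phi_eq_top h₂]
  obtain ⟨hs, ha⟩ := h₁
  obtain ⟨hu, hb⟩ := h₂
  have hsum : s + u = 0 → a + b = 0 := fun h => by
    rw [ha (by linarith), hb (by linarith), add_zero]
  rw [phi_eq_ofReal hs ha, phi_eq_ofReal hu hb, phi_eq_ofReal (add_nonneg hs hu) hsum,
    ← ENNReal.ofReal_add (by positivity) (by positivity)]
  apply ENNReal.ofReal_le_ofReal
  have key := add_sq_div_add_le hs hu ha hb
  calc (a + b) ^ 2 / (2 * (s + u)) + (s + u) / 2 = ((a + b) ^ 2 / (s + u) + (s + u)) / 2 := by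
        rw [mul_comm 2 (s + u), ← div_div]; ring
    _ ≤ ((a ^ 2 / s + b ^ 2 / u) + (s + u)) / 2 := by gcongr
    _ = a ^ 2 / (2 * s) + s / 2 + (b ^ 2 / (2 * u) + u / 2) := by ring

lemma phi_mul_mul {c : ℝ} (hc : 0 ≤ c) (a s : ℝ) :
    phi (c * a) (c * s) = ENNReal.ofReal c * phi a s := by
  obtain rfl | hc := hc.eq_or_lt
  · simp [phi]
  by_cases h : 0 ≤ s ∧ (s = 0 → a = 0)
  · obtain ⟨hs, ha⟩ := h
    rw [phi_eq_ofReal hs ha, phi_eq_ofReal (by positivity) (by simpa [hc.ne'] using ha),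
      ← ENNReal.ofReal_mul hc.le]
    obtain rfl | hs := hs.eq_or_lt
    · simp [ha rfl]
    congr 1
    field_simp
  · rw [phi_eq_top h, phi_eq_top (by simpa [mul_nonneg_iff_of_pos_left hc, hc.ne'] using h),
      ENNReal.mul_top (by simpa using hc)]

lemma phi_mul_add_mul_le {c d : ℝ} (hc : 0 ≤ c) (hd : 0 ≤ d) (a b s u : ℝ) :
    phi (c * a + d * b) (c * s + d * u) ≤
      ENNReal.ofReal c * phi a s + ENNReal.ofReal d * phi b u := by
  rw [← phi_mul_mul hc, ← phi_mul_mul hd]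
  exact phi_add_le _ _ _ _

end phi

section tv

variable {N : ℕ}

lemma tv_add_le (σ τ : Fin N → ℝ) : tv (σ + τ) ≤ tv σ + tv τ := by
  rw [tv, tv, tv, ← Finset.sum_add_distrib]
  gcongr with i
  simp only [Pi.add_apply, add_sub_add_comm]
  exact abs_add_le _ _

lemma tv_smul (c : ℝ) (σ : Fin N → ℝ) : tv (c • σ) = |c| * tv σ := by
  simp [tv, Finset.mul_sum, ← mul_sub, abs_mul]

lemma convex_setOf_tv_le (α : ℝ) : Convex ℝ {σ : Fin N → ℝ | tv σ ≤ α} := by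
  intro σ hσ τ hτ c d hc hd hcd
  calc tv (c • σ + d • τ) ≤ c * tv σ + d * tv τ := by
        simpa [tv_smul, abs_of_nonneg hc, abs_of_nonneg hd] using tv_add_le (c • σ) (d • τ)
    _ ≤ c * α + d * α := by gcongr <;> assumption
    _ = α := by rw [← add_mul, hcd, one_mul]

end tv

theorem psi_convex_general (N : ℕ) (α : ℝ) :
    ∀ (x y : Fin N → ℝ) (t : ℝ), 0 ≤ t → t ≤ 1 →
      psi α (t • x + (1 - t) • y) ≤
        ENNReal.ofReal t * psi α x + ENNReal.ofReal (1 - t) * psi α y := by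
  intro x y t ht0 ht1
  obtain rfl | ht0 := ht0.eq_or_lt
  · simp
  obtain rfl | ht1 := ht1.eq_or_lt
  · simp
  have hpos : ENNReal.ofReal t ≠ 0 := by simpa using ht0
  have hpos' : ENNReal.ofReal (1 - t) ≠ 0 := by simpa using ht1
  simp only [psi, ENNReal.mul_iInf_of_ne hpos ENNReal.ofReal_ne_top,
    ENNReal.mul_iInf_of_ne hpos' ENNReal.ofReal_ne_top, ENNReal.iInf_add, ENNReal.add_iInf]
  refine le_iInf₂ fun τ hτ => le_iInf₂ fun σ hσ => ?_
  calc _ ≤ ∑ n, phi ((t • x + (1 - t) • y) n) ((t • σ + (1 - t) • τ) n) :=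
        iInf₂_le _ (convex_setOf_tv_le α hσ hτ ht0.le (sub_nonneg.2 ht1.le) (by ring))
    _ ≤ ∑ n, (ENNReal.ofReal t * phi (x n) (σ n) + ENNReal.ofReal (1 - t) * phi (y n) (τ n)) :=
        Finset.sum_le_sum fun n _ => phi_mul_add_mul_le ht0.le (sub_nonneg.2 ht1.le) _ _ _ _
    _ = _ := by rw [Finset.sum_add_distrib, Finset.mul_sum, Finset.mul_sum]

/-- For every α ≥ 0, the LOP-ℓ2/ℓ1 penalty ψ_α is convex on ℝ^N
(in the extended-real-valued sense). -/
theorem psi_convex (N : ℕ) (α : ℝ) (hα : 0 ≤ α) :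
    ∀ (x y : Fin N → ℝ) (t : ℝ), 0 ≤ t → t ≤ 1 →
      psi α (t • x + (1 - t) • y) ≤
        ENNReal.ofReal t * psi α x + ENNReal.ofReal (1 - t) * psi α y :=
  psi_convex_general N α
end

section
/- If B^T B is nonsingular (B ∈ ℝ^{J×N}), then the GME-LOP-ℓ2/ℓ1 penalty Ψ_{B,α}(x) = ψ_α(x) − min_{v ∈ ℝ^N} [ψ_α(v) + ½‖B(x − v)‖₂²] is a bounded function on ℝ^N, for any α ≥ 0. -/
open scoped ENNReal

/-- Real-valued LOP-ℓ2/ℓ1 penalty (its value is finite for all x). -/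
noncomputable def psiR {N : ℕ} (α : ℝ) (x : Fin N → ℝ) : ℝ := (psi α x).toReal

/-- The GME-LOP-ℓ2/ℓ1 penalty Ψ_{B,α}. -/
noncomputable def gme {N J : ℕ} (B : Matrix (Fin J) (Fin N) ℝ) (α : ℝ)
    (x : Fin N → ℝ) : ℝ :=
  psiR α x - ⨅ v : Fin N → ℝ,
    (psiR α v + (1 / 2) * ∑ j : Fin J, (B.mulVec (x - v) j) ^ 2)
/-!
Adding a constant `c > 0` to every scale `σ_n` leaves `‖Dσ‖₁` unchanged, and by joint convexity of
`(x, σ) ↦ x² / σ` it gives `ψ_α(x) ≤ ψ_α(v) + ‖x - v‖² / (2c) + Nc/2`. Invertibility of `BᵀB` gives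
`‖B d‖² ≥ m ‖d‖²` for some `m > 0`, so with `c = 1/m` every value of the inner objective
`ψ_α(v) + ½‖B(x - v)‖²` is at least `ψ_α(x) - N/(2m)`, while its value at `v = x` is `ψ_α(x)`.
Hence `0 ≤ Ψ_{B,α} ≤ N/(2m)`.
-/

open scoped Matrix

lemma Matrix.mulVec_injective_of_isUnit_transpose_mul {m n : Type*} [Fintype m] [Fintype n]
    [DecidableEq n] {B : Matrix m n ℝ} (hB : IsUnit (Bᵀ * B)) : Function.Injective B.mulVec := by
  refine Function.Injective.of_comp (f := Bᵀ.mulVec) ?_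
  convert Matrix.mulVec_injective_iff_isUnit.2 hB using 1
  ext d : 1
  exact Matrix.mulVec_mulVec d Bᵀ B

lemma Matrix.exists_pos_mul_sum_sq_le_sum_sq_mulVec {m n : Type*} [Fintype m] [Fintype n]
    [DecidableEq n] {B : Matrix m n ℝ} (hB : Function.Injective B.mulVec) :
    ∃ c > 0, ∀ d : n → ℝ, c * ∑ i, d i ^ 2 ≤ ∑ j, B.mulVec d j ^ 2 := by
  let T := Matrix.toLpLin 2 2 B
  have hT : ∀ d, T (WithLp.toLp 2 d) = WithLp.toLp 2 (B.mulVec d) := Matrix.toLpLin_toLp 2 2 B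
  have hker : LinearMap.ker T = ⊥ := by
    refine LinearMap.ker_eq_bot'.2 fun d hd => ?_
    rw [← WithLp.toLp_ofLp (p := 2) d, hT, WithLp.toLp_eq_zero] at hd
    rw [← WithLp.toLp_ofLp (p := 2) d, hB (hd.trans (Matrix.mulVec_zero B).symm),
      WithLp.toLp_zero]
  obtain ⟨K, hK, hanti⟩ := T.exists_antilipschitzWith hker
  refine ⟨((K : ℝ) ^ 2)⁻¹, by positivity, fun d => ?_⟩
  have hnorm := hanti.le_mul_norm (map_zero T) (WithLp.toLp 2 d)
  rw [hT] at hnorm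
  have hsq := pow_le_pow_left₀ (norm_nonneg _) hnorm 2
  simp only [EuclideanSpace.norm_sq_eq, mul_pow, Real.norm_eq_abs, sq_abs] at hsq
  rw [inv_mul_le_iff₀ (by positivity)]
  simpa using hsq

lemma tv_add_const {N : ℕ} (σ : Fin N → ℝ) (c : ℝ) : tv (fun n => σ n + c) = tv σ := by
  simp only [tv, add_sub_add_right_eq_sub]

lemma phi_add_le_s14 (x v s : ℝ) {c : ℝ} (hc : 0 < c) :
    phi x (s + c) ≤ phi v s + ENNReal.ofReal ((x - v) ^ 2 / (2 * c) + c / 2) := by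
  unfold phi
  by_cases hs : 0 < s
  · rw [if_pos hs, if_pos (by linarith), ← ENNReal.ofReal_add (by positivity) (by positivity)]
    refine ENNReal.ofReal_le_ofReal ?_
    have key : x ^ 2 / (2 * (s + c)) ≤ v ^ 2 / (2 * s) + (x - v) ^ 2 / (2 * c) := by
      -- the gap is `(v c - (x - v) s)² / (2 s c (s + c))`
      rw [div_add_div _ _ (by positivity) (by positivity),
        div_le_div_iff₀ (by positivity) (by positivity)]
      nlinarith [sq_nonneg (v * c - (x - v) * s), mul_pos hs hc, sq_nonneg v, sq_nonneg (x - v)]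
    linarith
  · rw [if_neg hs]
    by_cases h0 : v = 0 ∧ s = 0
    · obtain ⟨rfl, rfl⟩ := h0
      rw [if_pos (by linarith), if_pos ⟨rfl, rfl⟩, zero_add, zero_add, sub_zero]
    · rw [if_neg h0, top_add]
      exact le_top

lemma psi_le_add {N : ℕ} (α : ℝ) {c : ℝ} (hc : 0 < c) (x v : Fin N → ℝ) :
    psi α x ≤ psi α v + ENNReal.ofReal ((∑ n, (x n - v n) ^ 2) / (2 * c) + N * c / 2) := by
  have hsum : (∑ n, (x n - v n) ^ 2) / (2 * c) + N * c / 2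
      = ∑ n, ((x n - v n) ^ 2 / (2 * c) + c / 2) := by
    rw [Finset.sum_add_distrib, Finset.sum_const, Finset.card_univ, Fintype.card_fin,
      ← Finset.sum_div, nsmul_eq_mul]
    ring
  rw [hsum, ENNReal.ofReal_sum_of_nonneg fun n _ => by positivity]
  conv_rhs => rw [psi, ENNReal.iInf_add]
  refine le_iInf fun σ => ?_
  rw [ENNReal.iInf_add]
  refine le_iInf fun hσ => ?_
  calc psi α x ≤ ∑ n, phi (x n) (σ n + c) :=
        iInf_le_of_le (fun n => σ n + c) (iInf_le_of_le ((tv_add_const σ c).trans_le hσ) le_rfl)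
    _ ≤ ∑ n, (phi (v n) (σ n) + ENNReal.ofReal ((x n - v n) ^ 2 / (2 * c) + c / 2)) :=
        Finset.sum_le_sum fun n _ => phi_add_le_s14 (x n) (v n) (σ n) hc
    _ = _ := Finset.sum_add_distrib

lemma psi_zero {N : ℕ} {α : ℝ} (hα : 0 ≤ α) : psi α (0 : Fin N → ℝ) = 0 := by
  refine le_antisymm (iInf_le_of_le 0 (iInf_le_of_le ?_ ?_)) zero_le
  · simpa [tv] using hα
  · simp [phi]

lemma psi_ne_top {N : ℕ} {α : ℝ} (hα : 0 ≤ α) (x : Fin N → ℝ) : psi α x ≠ ⊤ := by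
  have h := psi_le_add α one_pos x 0
  rw [psi_zero hα, zero_add] at h
  exact ne_top_of_le_ne_top ENNReal.ofReal_ne_top h

lemma psiR_le_add {N : ℕ} {α : ℝ} (hα : 0 ≤ α) {c : ℝ} (hc : 0 < c) (x v : Fin N → ℝ) :
    psiR α x ≤ psiR α v + ((∑ n, (x n - v n) ^ 2) / (2 * c) + N * c / 2) := by
  have h := ENNReal.toReal_mono (ENNReal.add_ne_top.2 ⟨psi_ne_top hα v, ENNReal.ofReal_ne_top⟩)
    (psi_le_add α hc x v)
  rwa [ENNReal.toReal_add (psi_ne_top hα v) ENNReal.ofReal_ne_top,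
    ENNReal.toReal_ofReal (by positivity)] at h

lemma gme_nonneg {N J : ℕ} (B : Matrix (Fin J) (Fin N) ℝ) (α : ℝ) (x : Fin N → ℝ) :
    0 ≤ gme B α x := by
  refine sub_nonneg.2 ((ciInf_le ⟨0, ?_⟩ x).trans ?_)
  · rintro _ ⟨v, rfl⟩
    exact add_nonneg ENNReal.toReal_nonneg (by positivity)
  · simp

lemma gme_le_of_mul_sum_sq_le {N J : ℕ} {B : Matrix (Fin J) (Fin N) ℝ} {α : ℝ} (hα : 0 ≤ α)
    {m : ℝ} (hm : 0 < m)
    (hB : ∀ d, m * ∑ n, d n ^ 2 ≤ ∑ j, B.mulVec d j ^ 2) (x : Fin N → ℝ) :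
    gme B α x ≤ N / (2 * m) := by
  refine sub_le_comm.1 (le_ciInf fun v => ?_)
  have hx := psiR_le_add hα (inv_pos.2 hm) x v
  have hxv := hB (x - v)
  simp only [Pi.sub_apply] at hxv
  have hcoef : ∀ S : ℝ, S / (2 * m⁻¹) = m * S / 2 := fun S => by field_simp
  have hconst : (N : ℝ) * m⁻¹ / 2 = N / (2 * m) := by field_simp
  rw [hcoef, hconst] at hx
  linarith

/-- If BᵀB is nonsingular, then Ψ_{B,α} is bounded on ℝ^N for any α ≥ 0. -/
theorem gme_bounded (N J : ℕ) (B : Matrix (Fin J) (Fin N) ℝ)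
    (hB : IsUnit (B.transpose * B)) (α : ℝ) (hα : 0 ≤ α) :
    ∃ C : ℝ, ∀ x : Fin N → ℝ, |gme B α x| ≤ C := by
  obtain ⟨m, hm, hmB⟩ := Matrix.exists_pos_mul_sum_sq_le_sum_sq_mulVec
    (Matrix.mulVec_injective_of_isUnit_transpose_mul hB)
  refine ⟨N / (2 * m), fun x => abs_le.2 ⟨?_, gme_le_of_mul_sum_sq_le hα hm hmB x⟩⟩
  exact (neg_nonpos.2 (by positivity)).trans (gme_nonneg B α x)
end

section
/- If B^T B = (ω/λ)(A^T A + μ P) with ω ∈ [0,1], λ > 0, μ > 0, P positive definite, and Ψ_{B,α}(x) = ψ_α(x) − min_v [ψ_α(v) + ½‖B(x−v)‖₂²] with ψ_α convex, then the objective x ↦ ½‖Ax − r‖₂² + (μ/2)‖x − x̄‖_P² + λ Ψ_{B,α}(x) is convex on ℝ^N. -/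
/-!
Write the objective as `F x - ⨅ v, λ g(x, v)` with `F = ½‖Ax - r‖² + (μ/2)‖x - x̄‖²_P + λψ` and
`g(x, v) = ψ v + ½‖B(x - v)‖²`. For fixed `v`, `F - λ g(·, v)` is `λψ` plus a quadratic whose
Hessian is `AᵀA + μP - λBᵀB = (1 - ω)(AᵀA + μP) ⪰ 0`, so it is convex; and `F - ⨅ v, λ g(·, v)`
is the pointwise supremum of these convex functions.
-/

open Matrix Set

section InfimalProjection

variable {E : Type*} [AddCommGroup E] [Module ℝ E] {F : E → ℝ}

lemma convexOn_sub_iInf_of_bddBelow {ι : Sort*} [Nonempty ι] {G : E → ι → ℝ}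
    (hFG : ∀ i, ConvexOn ℝ univ fun x => F x - G x i) (hbdd : ∀ x, BddBelow (range (G x))) :
    ConvexOn ℝ univ fun x => F x - ⨅ i, G x i := by
  refine ⟨convex_univ, fun x _ y _ a b ha hb hab => ?_⟩
  have key : ∀ i, F (a • x + b • y) - (a * (F x - ⨅ i, G x i) + b * (F y - ⨅ i, G y i))
      ≤ G (a • x + b • y) i := by
    intro i
    have hi := (hFG i).2 (mem_univ x) (mem_univ y) ha hb hab
    have hx := mul_le_mul_of_nonneg_left (ciInf_le (hbdd x) i) ha
    have hy := mul_le_mul_of_nonneg_left (ciInf_le (hbdd y) i) hb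
    simp only [smul_eq_mul] at hi
    linarith
  simp only [smul_eq_mul]
  linarith [le_ciInf key]

variable {V : Type*} [AddCommGroup V] [Module ℝ V] {G : E → V → ℝ}

lemma ConvexOn.left_slice (hG : ConvexOn ℝ univ fun p : E × V => G p.1 p.2) (v : V) :
    ConvexOn ℝ univ fun x => G x v := by
  refine ⟨convex_univ, fun x _ y _ a b ha hb hab => ?_⟩
  simpa [← add_smul, hab] using hG.2 (mem_univ (x, v)) (mem_univ (y, v)) ha hb hab

/-- The lower bound at `x` comes from writing `x₀` as the midpoint of `x` and `2 • x₀ - x`. -/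
lemma ConvexOn.bddBelow_range_slice (hG : ConvexOn ℝ univ fun p : E × V => G p.1 p.2)
    {x₀ : E} (h : BddBelow (range (G x₀))) (x : E) : BddBelow (range (G x)) := by
  obtain ⟨c, hc⟩ := h
  refine ⟨2 * c - G ((2 : ℝ) • x₀ - x) 0, ?_⟩
  rintro _ ⟨v, rfl⟩
  have hmid := hG.2 (mem_univ (x, v)) (mem_univ ((2 : ℝ) • x₀ - x, 0))
    (by norm_num : (0 : ℝ) ≤ 1 / 2) (by norm_num : (0 : ℝ) ≤ 1 / 2) (by norm_num)
  have hx₀ : (1 / 2 : ℝ) • x + (1 / 2 : ℝ) • ((2 : ℝ) • x₀ - x) = x₀ := by module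
  simp only [Prod.smul_mk, Prod.mk_add_mk, smul_zero, add_zero, hx₀, smul_eq_mul] at hmid
  linarith [hc ⟨(1 / 2 : ℝ) • v, rfl⟩]

/-- Without a lower bound the infimum takes Lean's junk value `0` at every point, and then the
claim reduces to the convexity of `F = (F - G(·, v)) + G(·, v)`. -/
theorem convexOn_sub_iInf (hG : ConvexOn ℝ univ fun p : E × V => G p.1 p.2)
    (hFG : ∀ v, ConvexOn ℝ univ fun x => F x - G x v) :
    ConvexOn ℝ univ fun x => F x - ⨅ v, G x v := by
  by_cases hbdd : ∀ x, BddBelow (range (G x))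
  · exact convexOn_sub_iInf_of_bddBelow hFG hbdd
  · push Not at hbdd
    obtain ⟨x₀, hx₀⟩ := hbdd
    have hzero : ∀ x, ⨅ v, G x v = 0 := fun x =>
      Real.iInf_of_not_bddBelow fun hx => hx₀ (hG.bddBelow_range_slice hx x₀)
    simpa [hzero] using
      ((hFG 0).add (hG.left_slice 0)).congr fun x _ => sub_add_cancel (F x) (G x 0)

end InfimalProjection

lemma convexOn_univ_of_convexComb_eq {E : Type*} [AddCommGroup E] [Module ℝ E] {f q : E → ℝ}
    (hq : ∀ x, 0 ≤ q x)
    (hf : ∀ (x y : E) (t s : ℝ), t + s = 1 →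
      f (t • x + s • y) = t * f x + s * f y - t * s * q (x - y)) :
    ConvexOn ℝ univ f := by
  refine ⟨convex_univ, fun x _ y _ t s ht hs hts => ?_⟩
  rw [hf x y t s hts, smul_eq_mul, smul_eq_mul]
  linarith [mul_nonneg (mul_nonneg ht hs) (hq (x - y))]

section QuadraticDeficit

variable {ι κ : Type*} [Fintype ι] [Fintype κ] {t s : ℝ}

lemma dotProduct_mulVec_convexComb (S : Matrix ι ι ℝ) (u w : ι → ℝ) (hts : t + s = 1) :
    (t • u + s • w) ⬝ᵥ S *ᵥ (t • u + s • w) =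
      t * (u ⬝ᵥ S *ᵥ u) + s * (w ⬝ᵥ S *ᵥ w) - t * s * ((u - w) ⬝ᵥ S *ᵥ (u - w)) := by
  simp only [mulVec_add, mulVec_smul, mulVec_sub, add_dotProduct, dotProduct_add,
    smul_dotProduct, dotProduct_smul, sub_dotProduct, dotProduct_sub, smul_eq_mul]
  linear_combination (t * (u ⬝ᵥ S *ᵥ u) + s * (w ⬝ᵥ S *ᵥ w)) * hts

lemma dotProduct_mulVec_sub_convexComb (S : Matrix ι ι ℝ) (c x y : ι → ℝ) (hts : t + s = 1) :
    (t • x + s • y - c) ⬝ᵥ S *ᵥ (t • x + s • y - c) =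
      t * ((x - c) ⬝ᵥ S *ᵥ (x - c)) + s * ((y - c) ⬝ᵥ S *ᵥ (y - c)) -
        t * s * ((x - y) ⬝ᵥ S *ᵥ (x - y)) := by
  have hshift : t • x + s • y - c = t • (x - c) + s • (y - c) :=
    calc t • x + s • y - c = t • (x - c) + s • (y - c) + (t + s - 1) • c := by module
      _ = t • (x - c) + s • (y - c) := by rw [hts, sub_self, zero_smul, add_zero]
  rw [hshift, dotProduct_mulVec_convexComb S _ _ hts, sub_sub_sub_cancel_right]

lemma sum_sq_mulVec (L : Matrix κ ι ℝ) (w : ι → ℝ) :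
    ∑ k, (L *ᵥ w) k ^ 2 = w ⬝ᵥ (Lᵀ * L) *ᵥ w := by
  rw [← mulVec_mulVec, dotProduct_mulVec, vecMul_transpose]
  simp [dotProduct, sq]

lemma sum_sq_mulVec_sub_convexComb (L : Matrix κ ι ℝ) (c : κ → ℝ) (x y : ι → ℝ)
    (hts : t + s = 1) :
    ∑ k, ((L *ᵥ (t • x + s • y)) k - c k) ^ 2 =
      t * ∑ k, ((L *ᵥ x) k - c k) ^ 2 + s * ∑ k, ((L *ᵥ y) k - c k) ^ 2 -
        t * s * ((x - y) ⬝ᵥ (Lᵀ * L) *ᵥ (x - y)) := by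
  classical
  have hsq : ∀ w, ∑ k, ((L *ᵥ w) k - c k) ^ 2 = (L *ᵥ w - c) ⬝ᵥ 1 *ᵥ (L *ᵥ w - c) := by
    simp [dotProduct, sq]
  rw [hsq, hsq, hsq, mulVec_add, mulVec_smul, mulVec_smul,
    dotProduct_mulVec_sub_convexComb _ _ _ _ hts, ← mulVec_sub, one_mulVec, ← sum_sq_mulVec]
  simp [dotProduct, sq]

lemma convexOn_sum_sq_mulVec (L : Matrix κ ι ℝ) :
    ConvexOn ℝ univ fun w => ∑ k, (L *ᵥ w) k ^ 2 := by
  refine convexOn_univ_of_convexComb_eq (q := fun w => ∑ k, (L *ᵥ w) k ^ 2)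
    (fun w => Finset.sum_nonneg fun k _ => sq_nonneg _) fun x y t s hts => ?_
  simp only [sum_sq_mulVec]
  exact dotProduct_mulVec_convexComb _ x y hts

end QuadraticDeficit

section LeastSquares

variable {ι κ η : Type*} [Fintype ι] [Fintype κ] [Fintype η]

lemma convexOn_leastSquares_sub_sum_sq (A : Matrix κ ι ℝ) (r : κ → ℝ) (P : Matrix ι ι ℝ)
    (xbar : ι → ℝ) (B : Matrix η ι ℝ) (v : ι → ℝ) {μ lam : ℝ}
    (hK : (Aᵀ * A + μ • P - lam • (Bᵀ * B)).PosSemidef) :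
    ConvexOn ℝ univ fun x => (1 / 2) * ∑ m, ((A *ᵥ x) m - r m) ^ 2 +
      (μ / 2) * ((x - xbar) ⬝ᵥ P *ᵥ (x - xbar)) - (lam / 2) * ∑ j, (B *ᵥ (x - v)) j ^ 2 := by
  refine convexOn_univ_of_convexComb_eq
    (q := fun w => (1 / 2) * (w ⬝ᵥ (Aᵀ * A + μ • P - lam • (Bᵀ * B)) *ᵥ w))
    (fun w => by simpa using hK.dotProduct_mulVec_nonneg w) fun x y t s hts => ?_
  simp only [sum_sq_mulVec_sub_convexComb A r x y hts, sum_sq_mulVec B,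
    dotProduct_mulVec_sub_convexComb _ _ x y hts, sub_mulVec, add_mulVec, smul_mulVec,
    dotProduct_sub, dotProduct_add, dotProduct_smul, smul_eq_mul]
  ring

lemma posSemidef_sub_smul_of_transpose_mul_eq {A : Matrix κ ι ℝ} {P : Matrix ι ι ℝ}
    {B : Matrix η ι ℝ} {ω lam μ : ℝ} (hP : P.PosSemidef) (hμ : 0 ≤ μ) (hω : ω ≤ 1)
    (hlam : lam ≠ 0) (hB : Bᵀ * B = (ω / lam) • (Aᵀ * A + μ • P)) :
    (Aᵀ * A + μ • P - lam • (Bᵀ * B)).PosSemidef := by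
  have hK : Aᵀ * A + μ • P - lam • (Bᵀ * B) = (1 - ω) • (Aᵀ * A + μ • P) := by
    rw [hB, smul_smul, mul_div_cancel₀ _ hlam, sub_smul, one_smul]
  rw [hK]
  refine PosSemidef.smul ?_ (sub_nonneg.2 hω)
  simpa using (posSemidef_conjTranspose_mul_self A).add (hP.smul hμ)

lemma convexOn_add_sum_sq_mulVec_sub {ψ : (ι → ℝ) → ℝ} (hψ : ConvexOn ℝ univ ψ)
    (B : Matrix η ι ℝ) :
    ConvexOn ℝ univ fun p : (ι → ℝ) × (ι → ℝ) =>
      ψ p.2 + (1 / 2) * ∑ j, (B *ᵥ (p.1 - p.2)) j ^ 2 := by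
  have hdiff := (convexOn_sum_sq_mulVec B).comp_linearMap
    (LinearMap.fst ℝ (ι → ℝ) (ι → ℝ) - LinearMap.snd ℝ (ι → ℝ) (ι → ℝ))
  have hsnd := hψ.comp_linearMap (LinearMap.snd ℝ (ι → ℝ) (ι → ℝ))
  rw [preimage_univ] at hdiff hsnd
  exact hsnd.add (hdiff.smul (by norm_num))

end LeastSquares

theorem objective_convex_general (M N J : ℕ)
    (A : Matrix (Fin M) (Fin N) ℝ) (r : Fin M → ℝ) (xbar : Fin N → ℝ)
    (P : Matrix (Fin N) (Fin N) ℝ) (hP : P.PosDef)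
    (B : Matrix (Fin J) (Fin N) ℝ)
    (ω lam μ : ℝ) (hω1 : ω ≤ 1) (hlam : 0 < lam) (hμ : 0 < μ)
    (hB : B.transpose * B = (ω / lam) • (A.transpose * A + μ • P))
    (ψ : (Fin N → ℝ) → ℝ) (hψ : ConvexOn ℝ Set.univ ψ) :
    ConvexOn ℝ Set.univ (fun x : Fin N → ℝ =>
      (1 / 2) * ∑ m : Fin M, (A.mulVec x m - r m) ^ 2 +
        (μ / 2) * ((x - xbar) ⬝ᵥ P.mulVec (x - xbar)) +
        lam * (ψ x - ⨅ v : Fin N → ℝ,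
          (ψ v + (1 / 2) * ∑ j : Fin J, (B.mulVec (x - v) j) ^ 2))) := by
  have hK := posSemidef_sub_smul_of_transpose_mul_eq hP.posSemidef hμ.le hω1 hlam.ne' hB
  have hG := (convexOn_add_sum_sq_mulVec_sub hψ B).smul hlam.le
  have hFG : ∀ v, ConvexOn ℝ univ fun x =>
      (1 / 2) * ∑ m, ((A *ᵥ x) m - r m) ^ 2 + (μ / 2) * ((x - xbar) ⬝ᵥ P *ᵥ (x - xbar)) +
        lam * ψ x - lam • (ψ v + (1 / 2) * ∑ j, (B *ᵥ (x - v)) j ^ 2) := fun v =>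
    (((convexOn_leastSquares_sub_sum_sq A r P xbar B v hK).add (hψ.smul hlam.le)).add_const
      (-(lam * ψ v))).congr fun x _ => by simp only [Pi.add_apply, smul_eq_mul]; ring
  refine (convexOn_sub_iInf hG hFG).congr fun x _ => ?_
  simp only [smul_eq_mul]
  rw [← Real.mul_iInf_of_nonneg hlam.le]
  ring

/-- If BᵀB = (ω/λ)(AᵀA + μP) with ω ∈ [0,1], λ > 0, μ > 0 and P positive definite,
then x ↦ ½‖Ax − r‖₂² + (μ/2)‖x − x̄‖_P² + λΨ_{B,α}(x) is convex, where
Ψ_{B,α}(x) = ψ_α(x) − inf_v [ψ_α(v) + ½‖B(x−v)‖₂²] for a convex ψ_α. -/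
theorem objective_convex (M N J : ℕ)
    (A : Matrix (Fin M) (Fin N) ℝ) (r : Fin M → ℝ) (xbar : Fin N → ℝ)
    (P : Matrix (Fin N) (Fin N) ℝ) (hP : P.PosDef)
    (B : Matrix (Fin J) (Fin N) ℝ)
    (ω lam μ : ℝ) (hω0 : 0 ≤ ω) (hω1 : ω ≤ 1) (hlam : 0 < lam) (hμ : 0 < μ)
    (hB : B.transpose * B = (ω / lam) • (A.transpose * A + μ • P))
    (ψ : (Fin N → ℝ) → ℝ) (hψ : ConvexOn ℝ Set.univ ψ) :
    ConvexOn ℝ Set.univ (fun x : Fin N → ℝ =>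
      (1 / 2) * ∑ m : Fin M, (A.mulVec x m - r m) ^ 2 +
        (μ / 2) * ((x - xbar) ⬝ᵥ P.mulVec (x - xbar)) +
        lam * (ψ x - ⨅ v : Fin N → ℝ,
          (ψ v + (1 / 2) * ∑ j : Fin J, (B.mulVec (x - v) j) ^ 2))) :=
  objective_convex_general M N J A r xbar P hP B ω lam μ hω1 hlam hμ hB ψ hψ
end
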